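/- For every clarified Boolean matrix I (no two identical rows and no two identical columns), the matrix E(I) is an essential part of I; that is: (a) E(I) ≤ I and for every set F of formal concepts of I, if E(I) ≤ A_F ∘ B_F then I = A_F ∘ B_F; and (b) E(I) is the unique minimal (with respect to entrywise order) matrix J ≤ I satisfying property (a). -/

import Mathlib

/-- `C↑`: attributes shared by all objects in `C`. -/
def up {n m : ℕ} (I : Fin n → Fin m → Bool) (C : Finset (Fin n)) : Finset (Fin m) :=
  Finset.univ.filter fun j => ∀ i ∈ C, I i j = true

/-- `D↓`: objects sharing all attributes in `D`. -/
def dn {n m : ℕ} (I : Fin n → Fin m → Bool) (D : Finset (Fin m)) : Finset (Fin n) :=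
  Finset.univ.filter fun i => ∀ j ∈ D, I i j = true

/-- A formal concept of `I`: a pair `⟨C,D⟩` with `C↑ = D` and `D↓ = C`. -/
def isConcept {n m : ℕ} (I : Fin n → Fin m → Bool)
    (p : Finset (Fin n) × Finset (Fin m)) : Prop :=
  up I p.1 = p.2 ∧ dn I p.2 = p.1

/-- The interval `[γ(C), μ(D)]` in the concept lattice of `I`
(concepts ordered by extent inclusion). -/
def interval {n m : ℕ} (I : Fin n → Fin m → Bool)
    (C : Finset (Fin n)) (D : Finset (Fin m)) :
    Set (Finset (Fin n) × Finset (Fin m)) :=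
  {p | isConcept I p ∧ dn I (up I C) ⊆ p.1 ∧ p.1 ⊆ dn I D}

/-- The Boolean matrix `A_F ∘ B_F` determined by a set `F` of concepts:
entry `(i,j)` is 1 iff some concept in `F` covers `(i,j)`. -/
def cov {n m : ℕ} (F : Finset (Finset (Fin n) × Finset (Fin m))) :
    Fin n → Fin m → Bool :=
  fun i j => decide (∃ p ∈ F, i ∈ p.1 ∧ j ∈ p.2)

/-- The essential part `E(I)`: entry `(i,j)` is 1 iff the interval `I_{ij}` is
non-empty and inclusion-minimal among the non-empty intervals `I_{i'j'}`. -/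
noncomputable def Ess {n m : ℕ} (I : Fin n → Fin m → Bool) : Fin n → Fin m → Bool :=
  fun i j =>
    @decide ((interval I {i} {j}).Nonempty ∧
      ∀ (i' : Fin n) (j' : Fin m), (interval I {i'} {j'}).Nonempty →
        interval I {i'} {j'} ⊆ interval I {i} {j} →
        interval I {i'} {j'} = interval I {i} {j})
      (Classical.propDecidable _)

/-- `J` is an essential-part candidate for `I`: `J ≤ I` and covering all 1s of `J`
by formal concepts of `I` guarantees an exact decomposition of `I`. -/
def essProp {n m : ℕ} (I J : Fin n → Fin m → Bool) : Prop :=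
  (∀ i j, J i j ≤ I i j) ∧
  ∀ F : Finset (Finset (Fin n) × Finset (Fin m)), (∀ p ∈ F, isConcept I p) →
    (∀ i j, J i j ≤ cov F i j) → (∀ i j, I i j = cov F i j)

/-- `I` is clarified: no two identical rows and no two identical columns. -/
def clarified {n m : ℕ} (I : Fin n → Fin m → Bool) : Prop :=
  (∀ i i' : Fin n, (∀ j, I i j = I i' j) → i = i') ∧
  (∀ j j' : Fin m, (∀ i, I i j = I i j') → j = j')

/-!
Every non-empty interval `I_{ij}` contains a minimal one, and the minimal intervals are exactly
the ones selected by `E(I)`. A concept covers the cell `(i, j)` iff it lies in `I_{ij}`, so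
covering the cells of `E(I)` covers some concept of every non-empty interval, hence every 1 of
`I`. Conversely, if `J` misses an essential cell `(i, j)`, the concepts outside `I_{ij}` cover
`J`: for a 1 of `J` at `(i', j')`, the interval `I_{i'j'}` cannot lie inside the minimal `I_{ij}`,
since it would then equal it, and in a clarified context an interval determines its indices
through its bottom `γ(i)` and top `μ(j)`. These concepts do not cover `(i, j)`, so `J` fails (a).
-/

section Context

variable {n m : ℕ} (I : Fin n → Fin m → Bool)

theorem subset_dn_iff_subset_up {C : Finset (Fin n)} {D : Finset (Fin m)} :
    C ⊆ dn I D ↔ D ⊆ up I C := by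
  simp only [Finset.subset_iff, dn, up, Finset.mem_filter, Finset.mem_univ, true_and]
  exact forall₂_comm

theorem subset_dn_up (C : Finset (Fin n)) : C ⊆ dn I (up I C) :=
  (subset_dn_iff_subset_up I).2 subset_rfl

theorem subset_up_dn (D : Finset (Fin m)) : D ⊆ up I (dn I D) :=
  (subset_dn_iff_subset_up I).1 subset_rfl

theorem up_anti {C C' : Finset (Fin n)} (h : C ⊆ C') : up I C' ⊆ up I C :=
  (subset_dn_iff_subset_up I).1 (h.trans (subset_dn_up I C'))

theorem dn_anti {D D' : Finset (Fin m)} (h : D ⊆ D') : dn I D' ⊆ dn I D :=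
  (subset_dn_iff_subset_up I).2 (h.trans (subset_up_dn I D'))

theorem up_dn_up (C : Finset (Fin n)) : up I (dn I (up I C)) = up I C :=
  (up_anti I (subset_dn_up I C)).antisymm (subset_up_dn I _)

theorem dn_up_dn (D : Finset (Fin m)) : dn I (up I (dn I D)) = dn I D :=
  (dn_anti I (subset_up_dn I D)).antisymm (subset_dn_up I _)

theorem isConcept_dn_up (C : Finset (Fin n)) : isConcept I (dn I (up I C), up I C) :=
  ⟨up_dn_up I C, rfl⟩

theorem isConcept_up_dn (D : Finset (Fin m)) : isConcept I (dn I D, up I (dn I D)) :=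
  ⟨rfl, dn_up_dn I D⟩

theorem mem_up_singleton {i : Fin n} {j : Fin m} : j ∈ up I {i} ↔ I i j = true := by
  simp [up]

theorem mem_dn_singleton {i : Fin n} {j : Fin m} : i ∈ dn I {j} ↔ I i j = true := by
  simp [dn]

variable {I}

theorem isConcept.apply_eq_true {p : Finset (Fin n) × Finset (Fin m)} (hp : isConcept I p)
    {i : Fin n} {j : Fin m} (hi : i ∈ p.1) (hj : j ∈ p.2) : I i j = true := by
  rw [← hp.1] at hj
  simp only [up, Finset.mem_filter] at hj
  exact hj.2 i hi

theorem isConcept.mem_interval_iff {p : Finset (Fin n) × Finset (Fin m)} (hp : isConcept I p)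
    {i : Fin n} {j : Fin m} : p ∈ interval I {i} {j} ↔ i ∈ p.1 ∧ j ∈ p.2 := by
  have hextent : dn I (up I {i}) ⊆ p.1 ↔ i ∈ p.1 := by
    refine ⟨fun h => h (subset_dn_up I {i} (Finset.mem_singleton_self i)), fun hi => ?_⟩
    rw [← hp.2, ← hp.1]
    exact dn_anti I (up_anti I (Finset.singleton_subset_iff.2 hi))
  simp only [interval, Set.mem_ofPred_eq, hp, true_and, hextent, subset_dn_iff_subset_up, hp.1,
    Finset.singleton_subset_iff]

theorem cov_eq_true_iff {F : Finset (Finset (Fin n) × Finset (Fin m))}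
    (hF : ∀ p ∈ F, isConcept I p) {i : Fin n} {j : Fin m} :
    cov F i j = true ↔ ∃ p ∈ F, p ∈ interval I {i} {j} := by
  simp only [cov, decide_eq_true_eq]
  exact exists_congr fun p => and_congr_right fun hpF => ((hF p hpF).mem_interval_iff).symm

theorem dn_up_mem_interval {i : Fin n} {j : Fin m} (hij : I i j = true) :
    (dn I (up I {i}), up I {i}) ∈ interval I {i} {j} :=
  (isConcept_dn_up I {i}).mem_interval_iff.2
    ⟨subset_dn_up I {i} (Finset.mem_singleton_self i), (mem_up_singleton I).2 hij⟩

theorem up_dn_mem_interval {i : Fin n} {j : Fin m} (hij : I i j = true) :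
    (dn I {j}, up I (dn I {j})) ∈ interval I {i} {j} :=
  (isConcept_up_dn I {j}).mem_interval_iff.2
    ⟨(mem_dn_singleton I).2 hij, subset_up_dn I {j} (Finset.mem_singleton_self j)⟩

theorem interval_nonempty_iff {i : Fin n} {j : Fin m} :
    (interval I {i} {j}).Nonempty ↔ I i j = true :=
  ⟨fun ⟨_, hp⟩ => hp.1.apply_eq_true (hp.1.mem_interval_iff.1 hp).1
      (hp.1.mem_interval_iff.1 hp).2,
    fun hij => ⟨_, dn_up_mem_interval hij⟩⟩

theorem row_col_le_of_interval_subset {i i' : Fin n} {j j' : Fin m} (hij : I i j = true)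
    (h : interval I {i} {j} ⊆ interval I {i'} {j'}) :
    (∀ x, I i x = true → I i' x = true) ∧ (∀ x, I x j = true → I x j' = true) := by
  have hγ := (isConcept_dn_up I {i}).mem_interval_iff.1 (h (dn_up_mem_interval hij))
  have hμ := (isConcept_up_dn I {j}).mem_interval_iff.1 (h (up_dn_mem_interval hij))
  refine ⟨fun x hx => ?_, fun x hx => ?_⟩
  · simp only [dn, Finset.mem_filter] at hγ
    exact hγ.1.2 x ((mem_up_singleton I).2 hx)
  · simp only [up, Finset.mem_filter] at hμ
    exact hμ.2.2 x ((mem_dn_singleton I).2 hx)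

theorem clarified.interval_injective (hI : clarified I) {i i' : Fin n} {j j' : Fin m}
    (hne : (interval I {i} {j}).Nonempty) (heq : interval I {i} {j} = interval I {i'} {j'}) :
    i = i' ∧ j = j' := by
  have hij := interval_nonempty_iff.1 hne
  have hij' := interval_nonempty_iff.1 (heq ▸ hne)
  obtain ⟨hrow, hcol⟩ := row_col_le_of_interval_subset hij heq.subset
  obtain ⟨hrow', hcol'⟩ := row_col_le_of_interval_subset hij' heq.symm.subset
  exact ⟨hI.1 i i' fun x => Bool.eq_iff_iff.2 ⟨hrow x, hrow' x⟩,
    hI.2 j j' fun x => Bool.eq_iff_iff.2 ⟨hcol x, hcol' x⟩⟩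

variable (I) in
def nonemptyIntervals : Set (Set (Finset (Fin n) × Finset (Fin m))) :=
  {K | K.Nonempty ∧ ∃ i j, interval I {i} {j} = K}

theorem ess_eq_true_iff {i : Fin n} {j : Fin m} :
    Ess I i j = true ↔ Minimal (· ∈ nonemptyIntervals I) (interval I {i} {j}) := by
  simp only [Ess, decide_eq_true_eq, Minimal, nonemptyIntervals, Set.mem_ofPred_eq]
  constructor
  · rintro ⟨hne, hmin⟩
    refine ⟨⟨hne, i, j, rfl⟩, ?_⟩
    rintro _ ⟨hne', i', j', rfl⟩ hsub
    exact (hmin i' j' hne' hsub).ge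
  · rintro ⟨⟨hne, -⟩, hmin⟩
    exact ⟨hne, fun i' j' hne' hsub => hsub.antisymm (hmin ⟨hne', i', j', rfl⟩ hsub)⟩

theorem exists_ess_interval_subset {i : Fin n} {j : Fin m} (hij : I i j = true) :
    ∃ i' j', Ess I i' j' = true ∧ interval I {i'} {j'} ⊆ interval I {i} {j} := by
  have hfin : (nonemptyIntervals I).Finite :=
    (Set.finite_range fun q : Fin n × Fin m => interval I {q.1} {q.2}).subset
      fun _ ⟨_, i', j', hK⟩ => ⟨(i', j'), hK⟩
  obtain ⟨K, hKsub, hKmin⟩ :=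
    hfin.isPWO.exists_le_minimal ⟨interval_nonempty_iff.2 hij, i, j, rfl⟩
  obtain ⟨-, i', j', rfl⟩ := hKmin.prop
  exact ⟨i', j', ess_eq_true_iff.2 hKmin, hKsub⟩

theorem essProp_ess : essProp I (Ess I) := by
  refine ⟨fun i j => Bool.le_iff_imp.2 fun h => ?_, fun F hF hEF i j => ?_⟩
  · exact interval_nonempty_iff.1 (ess_eq_true_iff.1 h).prop.1
  · refine Bool.eq_iff_iff.2 ⟨fun hij => ?_, fun hcov => ?_⟩
    · obtain ⟨i', j', hess, hsub⟩ := exists_ess_interval_subset hij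
      obtain ⟨p, hpF, hp⟩ := (cov_eq_true_iff hF).1 (Bool.le_iff_imp.1 (hEF i' j') hess)
      exact (cov_eq_true_iff hF).2 ⟨p, hpF, hsub hp⟩
    · obtain ⟨p, hpF, hp⟩ := (cov_eq_true_iff hF).1 hcov
      exact interval_nonempty_iff.1 ⟨p, hp⟩

theorem clarified.ess_le_of_essProp (hI : clarified I) {J : Fin n → Fin m → Bool}
    (hJ : essProp I J) (i : Fin n) (j : Fin m) : Ess I i j ≤ J i j := by
  classical
  refine Bool.le_iff_imp.2 fun hess => by_contra fun hJij => ?_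
  have hmin := ess_eq_true_iff.1 hess
  let F := Finset.univ.filter fun p => isConcept I p ∧ p ∉ interval I {i} {j}
  have hF : ∀ p ∈ F, isConcept I p := fun p hp => (Finset.mem_filter.1 hp).2.1
  have hJF : ∀ i' j', J i' j' ≤ cov F i' j' := by
    refine fun i' j' => Bool.le_iff_imp.2 fun hJ' => ?_
    have hne : (interval I {i'} {j'}).Nonempty :=
      interval_nonempty_iff.2 (Bool.le_iff_imp.1 (hJ.1 i' j') hJ')
    have hnsub : ¬ interval I {i'} {j'} ⊆ interval I {i} {j} := fun hsub => by
      obtain ⟨rfl, rfl⟩ :=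
        hI.interval_injective hne (hsub.antisymm (hmin.2 ⟨hne, i', j', rfl⟩ hsub))
      exact hJij hJ'
    obtain ⟨p, hp, hpij⟩ := Set.not_subset.1 hnsub
    have hpF : p ∈ F := Finset.mem_filter.2 ⟨Finset.mem_univ p, hp.1, hpij⟩
    exact (cov_eq_true_iff hF).2 ⟨p, hpF, hp⟩
  have hcov : cov F i j = true := hJ.2 F hF hJF i j ▸ interval_nonempty_iff.1 hmin.prop.1
  obtain ⟨p, hpF, hp⟩ := (cov_eq_true_iff hF).1 hcov
  exact (Finset.mem_filter.1 hpF).2.2 hp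

end Context

theorem ess_is_unique_essential_part {n m : ℕ} (I : Fin n → Fin m → Bool)
    (hI : clarified I) :
    essProp I (Ess I) ∧
    ∀ J : Fin n → Fin m → Bool, essProp I J → ∀ i j, Ess I i j ≤ J i j :=
  ⟨essProp_ess, fun _ hJ => hI.ess_le_of_essProp hJ⟩
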